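/- Convex-like property of the limit sets of empiric probabilities: for every x ∈ M, if μ, ν ∈ pω(x) and λ is a real number with 0 ≤ λ ≤ 1, then there exists a measure μ_λ ∈ pω(x) such that dist(μ_λ, μ) = λ · dist(ν, μ), where dist is the Lévy–Prokhorov metric on P. -/

import Mathlib

/-! Since `E_{n+1}(x)` and `E_n(x)` differ by a mass of at most `1/(n+1)`, the real sequence
`dist(E_n(x), μ)` has steps tending to `0`. It comes close to `0` along a subsequence converging
to `μ` and close to `dist(ν, μ)` along one converging to `ν`, so it cannot avoid any intermediate
value `λ · dist(ν, μ)`: that value is a cluster value. Compactness of `P` lifts it to a cluster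
point of `(E_n(x))`, i.e. to a point of `pω(x)`, at the prescribed distance from `μ`. -/

open MeasureTheory Filter Topology ENNReal NNReal

variable {M : Type*} [MetricSpace M] [CompactSpace M] [MeasurableSpace M] [BorelSpace M]

/-- The empiric probability `E_{n+1}(x) = (1/(n+1)) ∑_{j=0}^{n} δ_{f^j(x)}`.
(The indexing is shifted: `empiric f x n` is the `(n+1)`-st empiric probability `E_{n+1}(x)`,
so that `(empiric f x n)_{n ≥ 0}` is exactly the sequence `(E_n(x))_{n ≥ 1}`.) -/
noncomputable def empiric (f : M → M) (x : M) (n : ℕ) : ProbabilityMeasure M :=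
  ⟨((n : ℝ≥0∞) + 1)⁻¹ • ∑ j ∈ Finset.range (n + 1), MeasureTheory.Measure.dirac (f^[j] x), by
    constructor
    rw [Measure.smul_apply, Measure.finset_sum_apply]
    simp only [Measure.dirac_apply_of_mem (Set.mem_univ _), Finset.sum_const,
      Finset.card_range, nsmul_eq_mul, mul_one, smul_eq_mul]
    rw [Nat.cast_add, Nat.cast_one]
    exact ENNReal.inv_mul_cancel (by simp) (by simp)⟩

/-- The limit set `pω(x)`: all weak* limits of convergent subsequences of the sequence
of empiric probabilities `(E_n(x))_{n ≥ 1}`. -/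
def pomega (f : M → M) (x : M) : Set (ProbabilityMeasure M) :=
  {μ | ∃ φ : ℕ → ℕ, StrictMono φ ∧ Tendsto (fun k => empiric f x (φ k)) atTop (𝓝 μ)}

/-- The Lévy–Prokhorov distance between two Borel probability measures. -/
noncomputable def probDist (μ ν : ProbabilityMeasure M) : ℝ :=
  levyProkhorovDist (μ : Measure M) (ν : Measure M)

/-- The basin of `ε`-attraction of `μ`:
`A_ε(μ) = {x ∈ M : inf_{ν ∈ pω(x)} dist(ν, μ) < ε}`. -/
def basinEps (f : M → M) (μ : ProbabilityMeasure M) (ε : ℝ) : Set M :=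
  {x | (⨅ ν ∈ pomega f x, probDist ν μ) < ε}

/-- `μ` is observable (SRB-like): for every `ε > 0`, the basin of `ε`-attraction of `μ`
has positive `m`-measure. -/
def Observable (f : M → M) (m : Measure M) (μ : ProbabilityMeasure M) : Prop :=
  ∀ ε : ℝ, 0 < ε → 0 < m (basinEps f μ ε)

/-- The basin of attraction `A(μ) = {x ∈ M : pω(x) = {μ}}`. -/
def basin (f : M → M) (μ : ProbabilityMeasure M) : Set M :=
  {x | pomega f x = {μ}}

/-- `μ` is an SRB (physical) measure: its basin of attraction has positive `m`-measure. -/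
def IsSRB (f : M → M) (m : Measure M) (μ : ProbabilityMeasure M) : Prop :=
  0 < m (basin f μ)

theorem mapClusterPt_of_tendsto_sub_of_frequently_lt_of_frequently_gt {h : ℕ → ℝ} {t : ℝ}
    (hstep : Tendsto (fun n => h (n + 1) - h n) atTop (𝓝 0))
    (hlt : ∃ᶠ n in atTop, h n < t) (hgt : ∃ᶠ n in atTop, t < h n) :
    MapClusterPt t atTop h := by
  rw [Metric.nhds_basis_ball.mapClusterPt_iff_frequently]
  intro ε hε
  by_contra hfar
  rw [not_frequently] at hfar
  obtain ⟨N, hN⟩ := eventually_atTop.1 <|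
    hfar.and (hstep.eventually (Metric.ball_mem_nhds 0 hε))
  obtain ⟨n₀, hn₀N, hn₀⟩ := frequently_atTop.1 hlt N
  -- Steps shorter than `ε` cannot jump over the gap `ball t ε`.
  have below : ∀ m, n₀ ≤ m → h m < t := by
    refine Nat.le_induction hn₀ fun m hm hmt => ?_
    obtain ⟨hmfar, hmstep⟩ := hN m (hn₀N.trans hm)
    simp only [Metric.mem_ball, Real.dist_eq, sub_zero, not_lt] at hmfar hmstep
    rw [abs_of_neg (sub_neg.2 hmt)] at hmfar
    linarith [le_abs_self (h (m + 1) - h m)]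
  obtain ⟨m, hm, hmt⟩ := frequently_atTop.1 hgt n₀
  exact (below m hm).not_gt hmt

theorem exists_mapClusterPt_eq_of_mapClusterPt_comp {X Y α : Type*} [TopologicalSpace X]
    [CompactSpace X] [TopologicalSpace Y] [T2Space Y] {g : X → Y} (hg : Continuous g)
    {u : α → X} {F : Filter α} {y : Y} (hy : MapClusterPt y F (g ∘ u)) :
    ∃ x, MapClusterPt x F u ∧ g x = y := by
  have : (F ⊓ comap (g ∘ u) (𝓝 y)).NeBot := by
    rw [neBot_inf_comap_iff_map, inf_comm]
    exact hy
  obtain ⟨x, hx⟩ := exists_clusterPt_of_compactSpace (map u (F ⊓ comap (g ∘ u) (𝓝 y)))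
  refine ⟨x, hx.mono (map_mono inf_le_left), eq_of_nhds_neBot ?_⟩
  have hgx : ClusterPt (g x) (map (g ∘ u) (F ⊓ comap (g ∘ u) (𝓝 y))) := by
    rw [← map_map]
    exact hx.map hg.continuousAt tendsto_map
  exact (hgx.mono (tendsto_comap.mono_left inf_le_right)).neBot

theorem exists_mapClusterPt_eq_of_mem_Icc {X : Type*} [TopologicalSpace X] [CompactSpace X]
    {u : ℕ → X} {g : X → ℝ} (hg : Continuous g)
    (hstep : Tendsto (fun n => g (u (n + 1)) - g (u n)) atTop (𝓝 0))
    {a b : X} (ha : MapClusterPt a atTop u) (hb : MapClusterPt b atTop u)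
    {t : ℝ} (ht : t ∈ Set.Icc (g a) (g b)) :
    ∃ c, MapClusterPt c atTop u ∧ g c = t := by
  rcases ht.1.eq_or_lt with rfl | hat
  · exact ⟨a, ha, rfl⟩
  rcases ht.2.eq_or_lt with rfl | htb
  · exact ⟨b, hb, rfl⟩
  refine exists_mapClusterPt_eq_of_mapClusterPt_comp hg
    (mapClusterPt_of_tendsto_sub_of_frequently_lt_of_frequently_gt hstep ?_ ?_)
  · exact (ha.continuousAt_comp hg.continuousAt).frequently (Iio_mem_nhds hat)
  · exact (hb.continuousAt_comp hg.continuousAt).frequently (Ioi_mem_nhds htb)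

lemma probDist_eq_dist (ρ μ : ProbabilityMeasure M) :
    probDist ρ μ = dist (LevyProkhorov.probabilityMeasureHomeomorph ρ)
      (LevyProkhorov.probabilityMeasureHomeomorph μ) := rfl

lemma continuous_probDist_left (μ : ProbabilityMeasure M) :
    Continuous fun ρ => probDist ρ μ :=
  LevyProkhorov.probabilityMeasureHomeomorph.continuous.dist continuous_const

lemma abs_probDist_sub_probDist_le (ρ₁ ρ₂ μ : ProbabilityMeasure M) :
    |probDist ρ₁ μ - probDist ρ₂ μ| ≤ probDist ρ₁ ρ₂ := by
  simp only [probDist_eq_dist]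
  exact abs_dist_sub_le _ _ _

lemma mem_pomega_iff_mapClusterPt {f : M → M} {x : M} {μ : ProbabilityMeasure M} :
    μ ∈ pomega f x ↔ MapClusterPt μ atTop (empiric f x) :=
  ⟨fun ⟨_, hφ, hlim⟩ => hlim.mapClusterPt.of_comp hφ.tendsto_atTop,
    MapClusterPt.tendsto_subseq⟩

lemma empiric_apply (f : M → M) (x : M) (n : ℕ) (s : Set M) :
    (empiric f x n : Measure M) s
      = ((n : ℝ≥0∞) + 1)⁻¹ * ∑ j ∈ Finset.range (n + 1), Measure.dirac (f^[j] x) s := by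
  simp [empiric]

lemma empiric_succ_apply_le (f : M → M) (x : M) (n : ℕ) (s : Set M) :
    (empiric f x (n + 1) : Measure M) s ≤ (empiric f x n : Measure M) s + ((n : ℝ≥0∞) + 2)⁻¹ := by
  rw [empiric_apply, empiric_apply, Finset.sum_range_succ, mul_add, Nat.cast_succ, add_assoc,
    one_add_one_eq_two]
  gcongr
  · norm_num
  · exact mul_le_of_le_one_right' prob_le_one

lemma levyProkhorovEDist_empiric_succ_le (f : M → M) (x : M) (n : ℕ) :
    levyProkhorovEDist (empiric f x (n + 1) : Measure M) (empiric f x n) ≤ ((n : ℝ≥0∞) + 2)⁻¹ :=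
  levyProkhorovEDist_le_of_forall_le _ _ _ fun _ B hε hε_top _ =>
    (empiric_succ_apply_le f x n B).trans <| add_le_add
      (measure_mono <| Metric.self_subset_thickening
        (ENNReal.toReal_pos (hε.trans_le' bot_le).ne' hε_top.ne) B) hε.le

lemma tendsto_probDist_empiric_succ (f : M → M) (x : M) :
    Tendsto (fun n => probDist (empiric f x (n + 1)) (empiric f x n)) atTop (𝓝 0) := by
  have hbound : Tendsto (fun n : ℕ => ((n : ℝ≥0∞) + 2)⁻¹) atTop (𝓝 0) := by
    convert ENNReal.tendsto_inv_nat_nhds_zero.comp (tendsto_add_atTop_nat 2) using 2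
    simp
  have hedist := tendsto_of_tendsto_of_tendsto_of_le_of_le tendsto_const_nhds hbound
    (fun n => zero_le) (levyProkhorovEDist_empiric_succ_le f x)
  exact (ENNReal.tendsto_toReal ENNReal.zero_ne_top).comp hedist

theorem pomega_convex_like_general (f : M → M) (x : M)
    (μ ν : ProbabilityMeasure M) (hμ : μ ∈ pomega f x) (hν : ν ∈ pomega f x)
    (lam : ℝ) (hlam : lam ∈ Set.Icc (0 : ℝ) 1) :
    ∃ μlam ∈ pomega f x, probDist μlam μ = lam * probDist ν μ := by
  simp only [mem_pomega_iff_mapClusterPt] at hμ hν ⊢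
  have hstep : Tendsto (fun n => probDist (empiric f x (n + 1)) μ - probDist (empiric f x n) μ)
      atTop (𝓝 0) :=
    squeeze_zero_norm (fun n => abs_probDist_sub_probDist_le _ _ μ)
      (tendsto_probDist_empiric_succ f x)
  have hdist : 0 ≤ probDist ν μ := ENNReal.toReal_nonneg
  refine exists_mapClusterPt_eq_of_mem_Icc (continuous_probDist_left μ) hstep hμ hν ⟨?_, ?_⟩
  · rw [probDist, levyProkhorovDist_self]
    exact mul_nonneg hlam.1 hdist
  · exact mul_le_of_le_one_left hdist hlam.2

/-- **Convex-like property of `pω(x)`.** For every `x ∈ M`, if `μ, ν ∈ pω(x)` and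
`0 ≤ λ ≤ 1`, then there exists `μ_λ ∈ pω(x)` with `dist(μ_λ, μ) = λ · dist(ν, μ)`. -/
theorem pomega_convex_like (f : M → M) (hf : Continuous f) (x : M)
    (μ ν : ProbabilityMeasure M) (hμ : μ ∈ pomega f x) (hν : ν ∈ pomega f x)
    (lam : ℝ) (hlam : lam ∈ Set.Icc (0 : ℝ) 1) :
    ∃ μlam ∈ pomega f x, probDist μlam μ = lam * probDist ν μ :=
  pomega_convex_like_general f x μ ν hμ hν lam hlam
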